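/- Let λ ∈ ℝ and let r be a positive integer. For all integers n ≥ k ≥ 0, the degenerate r-Stirling numbers of the second kind satisfy: {n+r \brace k+r}_{r,λ} = Σ_{l=k}^{n} C(n,l) {l \brace k}_λ (r)_{n−l,λ}. -/
import Mathlib


open Finset

/-- The degenerate falling factorial `(x)_{n,λ} = ∏_{i=0}^{n-1} (x - iλ)`. -/
noncomputable def degFall (lam x : ℝ) (n : ℕ) : ℝ :=
  ∏ i ∈ Finset.range n, (x - (i : ℝ) * lam)

/-- The degenerate Stirling numbers of the second kind
`{n \brace k}_λ = (1/k!) ∑_{j=0}^{k} (-1)^{k-j} C(k,j) (j)_{n,λ}`. -/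
noncomputable def degStirling (lam : ℝ) (n k : ℕ) : ℝ :=
  (1 / (Nat.factorial k : ℝ)) * ∑ j ∈ Finset.range (k + 1),
    (-1 : ℝ) ^ (k - j) * (Nat.choose k j : ℝ) * degFall lam (j : ℝ) n

/-- The degenerate `r`-Stirling numbers of the second kind
`{n+r \brace k+r}_{r,λ} = (1/k!) ∑_{j=0}^{k} (-1)^{k-j} C(k,j) (j+r)_{n,λ}`, equivalently
determined by `(x+r)_{n,λ} = ∑_{k=0}^{n} {n+r \brace k+r}_{r,λ} (x)_k` for all `x`. -/
noncomputable def degrStirling (lam : ℝ) (r : ℕ) (n k : ℕ) : ℝ :=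
  (1 / (Nat.factorial k : ℝ)) * ∑ j ∈ Finset.range (k + 1),
    (-1 : ℝ) ^ (k - j) * (Nat.choose k j : ℝ) * degFall lam ((j : ℝ) + (r : ℝ)) n

lemma degFall_zero (lam x : ℝ) : degFall lam x 0 = 1 := by simp [degFall]

lemma degFall_succ (lam x : ℝ) (n : ℕ) :
    degFall lam x (n + 1) = degFall lam x n * (x - (n : ℝ) * lam) := by
  simp [degFall, Finset.prod_range_succ]

/-- Vandermonde-type identity for the degenerate falling factorial. -/
lemma degFall_add (lam x y : ℝ) (n : ℕ) :
    degFall lam (x + y) n = ∑ l ∈ Finset.range (n + 1),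
      (Nat.choose n l : ℝ) * degFall lam x l * degFall lam y (n - l) := by
  induction n with
  | zero => simp [degFall]
  | succ n ih =>
    rw [degFall_succ, ih, Finset.sum_mul]
    have key : ∀ l ∈ Finset.range (n + 1),
        (Nat.choose n l : ℝ) * degFall lam x l * degFall lam y (n - l) *
          ((x + y) - (n : ℝ) * lam)
        = (Nat.choose n l : ℝ) * (degFall lam x (l + 1) * degFall lam y (n - l))
          + (Nat.choose n l : ℝ) * (degFall lam x l * degFall lam y (n - l + 1)) := by
      intro l hl
      rw [Finset.mem_range] at hl
      have hln : l ≤ n := Nat.lt_succ_iff.mp hl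
      have hcast : ((n - l : ℕ) : ℝ) = (n : ℝ) - (l : ℝ) := by
        push_cast [Nat.cast_sub hln]; ring
      rw [degFall_succ, degFall_succ, hcast]
      ring
    rw [Finset.sum_congr rfl key, Finset.sum_add_distrib]
    rw [Finset.sum_range_succ' (fun l => (Nat.choose (n+1) l : ℝ) * degFall lam x l *
      degFall lam y (n + 1 - l))]
    have pascal : ∀ l ∈ Finset.range (n + 1),
        (Nat.choose (n+1) (l+1) : ℝ) * degFall lam x (l+1) * degFall lam y (n + 1 - (l+1))
        = (Nat.choose n l : ℝ) * (degFall lam x (l + 1) * degFall lam y (n - l))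
          + (Nat.choose n (l+1) : ℝ) * (degFall lam x (l+1) * degFall lam y (n - l)) := by
      intro l hl
      rw [Nat.choose_succ_succ, show n + 1 - (l + 1) = n - l from by omega]
      push_cast [Nat.succ_eq_add_one]
      ring
    rw [Finset.sum_congr rfl pascal, Finset.sum_add_distrib]
    have second : (∑ l ∈ Finset.range (n + 1),
          (Nat.choose n (l+1) : ℝ) * (degFall lam x (l+1) * degFall lam y (n - l)))
        + (Nat.choose (n+1) 0 : ℝ) * degFall lam x 0 * degFall lam y (n + 1 - 0)
        = ∑ l ∈ Finset.range (n + 1),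
          (Nat.choose n l : ℝ) * (degFall lam x l * degFall lam y (n - l + 1)) := by
      have congr1 : ∀ l ∈ Finset.range (n + 1),
          (Nat.choose n l : ℝ) * (degFall lam x l * degFall lam y (n - l + 1))
          = (Nat.choose n l : ℝ) * (degFall lam x l * degFall lam y (n + 1 - l)) := by
        intro l hl
        rw [Finset.mem_range] at hl
        rw [show n + 1 - l = n - l + 1 from by omega]
      rw [Finset.sum_congr rfl congr1]
      have expand : ∑ l ∈ Finset.range (n + 1),
          (Nat.choose n l : ℝ) * (degFall lam x l * degFall lam y (n + 1 - l))
          = ∑ l ∈ Finset.range (n + 2),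
            (Nat.choose n l : ℝ) * (degFall lam x l * degFall lam y (n + 1 - l)) := by
        rw [eq_comm, Finset.sum_range_succ]
        simp [Nat.choose_succ_self]
      rw [expand, Finset.sum_range_succ' (fun l => (Nat.choose n l : ℝ) *
        (degFall lam x l * degFall lam y (n + 1 - l))) (n+1)]
      simp [degFall_zero]
    linarith [second]

open Polynomial in
/-- The `k`-th finite difference of a polynomial of degree `< k` vanishes. -/
lemma altsum_poly : ∀ (k : ℕ) (p : Polynomial ℝ), p.natDegree < k →
    ∑ j ∈ Finset.range (k + 1),
      (-1 : ℝ) ^ (k - j) * (Nat.choose k j : ℝ) * p.eval (j : ℝ) = 0 := by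
  intro k
  induction k with
  | zero => intro p hp; omega
  | succ k ih =>
    intro p hp
    set q : Polynomial ℝ := p.comp (X + 1) - p with hq
    have hqe : ∀ j : ℕ, q.eval (j : ℝ) = p.eval ((j : ℝ) + 1) - p.eval (j : ℝ) := by
      intro j; simp [hq, eval_comp]
    have main : ∑ j ∈ Finset.range (k + 2),
        (-1 : ℝ) ^ (k + 1 - j) * (Nat.choose (k+1) j : ℝ) * p.eval (j : ℝ)
        = ∑ j ∈ Finset.range (k + 1),
          (-1 : ℝ) ^ (k - j) * (Nat.choose k j : ℝ) * q.eval (j : ℝ) := by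
      rw [Finset.sum_range_succ' (fun j => (-1 : ℝ) ^ (k + 1 - j) *
        (Nat.choose (k+1) j : ℝ) * p.eval (j : ℝ)) (k+1)]
      have pascal : ∀ j ∈ Finset.range (k + 1),
          (-1 : ℝ) ^ (k + 1 - (j+1)) * (Nat.choose (k+1) (j+1) : ℝ) * p.eval ((j+1 : ℕ) : ℝ)
          = (-1 : ℝ) ^ (k - j) * (Nat.choose k j : ℝ) * p.eval ((j : ℝ) + 1)
            + (-1 : ℝ) ^ (k - j) * (Nat.choose k (j+1) : ℝ) * p.eval ((j : ℝ) + 1) := by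
        intro j hj
        rw [Nat.choose_succ_succ, show k + 1 - (j+1) = k - j from by omega]
        push_cast [Nat.succ_eq_add_one]
        ring
      rw [Finset.sum_congr rfl pascal, Finset.sum_add_distrib]
      have second : (∑ j ∈ Finset.range (k + 1),
            (-1 : ℝ) ^ (k - j) * (Nat.choose k (j+1) : ℝ) * p.eval ((j : ℝ) + 1))
          + (-1 : ℝ) ^ (k + 1 - 0) * (Nat.choose (k+1) 0 : ℝ) * p.eval ((0 : ℕ) : ℝ)
          = - ∑ j ∈ Finset.range (k + 1),
            (-1 : ℝ) ^ (k - j) * (Nat.choose k j : ℝ) * p.eval (j : ℝ) := by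
        have step : ∀ j ∈ Finset.range (k + 1),
            (-1 : ℝ) ^ (k - j) * (Nat.choose k (j+1) : ℝ) * p.eval ((j : ℝ) + 1)
            = - ((-1 : ℝ) ^ (k - (j+1)) * (Nat.choose k (j+1) : ℝ) *
                p.eval (((j+1 : ℕ)) : ℝ)) := by
          intro j hj
          rw [Finset.mem_range] at hj
          push_cast
          rcases Nat.lt_or_ge j k with h | h
          · rw [show k - j = (k - (j+1)) + 1 from by omega]
            ring
          · have hjk : j = k := by omega
            subst hjk
            simp
        rw [Finset.sum_congr rfl step]
        rw [show ((-1 : ℝ) ^ (k + 1 - 0) * (Nat.choose (k+1) 0 : ℝ) * p.eval ((0 : ℕ) : ℝ))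
          = - ((-1 : ℝ) ^ (k - 0) * (Nat.choose k 0 : ℝ) * p.eval ((0 : ℕ) : ℝ)) from by
            simp [pow_succ]]
        rw [← Finset.sum_range_succ' (fun j => - ((-1 : ℝ) ^ (k - j) *
          (Nat.choose k j : ℝ) * p.eval (j : ℝ))) (k+1)]
        rw [Finset.sum_range_succ]
        simp [Nat.choose_succ_self]
      rw [add_assoc, second]
      have third : ∀ j ∈ Finset.range (k + 1),
          (-1 : ℝ) ^ (k - j) * (Nat.choose k j : ℝ) * p.eval ((j : ℝ) + 1)
          = (-1 : ℝ) ^ (k - j) * (Nat.choose k j : ℝ) * q.eval (j : ℝ)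
            + (-1 : ℝ) ^ (k - j) * (Nat.choose k j : ℝ) * p.eval (j : ℝ) := by
        intro j hj; rw [hqe]; ring
      rw [Finset.sum_congr rfl third, Finset.sum_add_distrib]
      ring
    rw [main]
    by_cases hq0 : q = 0
    · simp [hq0]
    · apply ih
      have hp0 : p ≠ 0 := by
        intro h; apply hq0; simp [hq, h]
      rcases Nat.eq_zero_or_pos p.natDegree with h0 | hpos
      · exfalso
        apply hq0
        have := Polynomial.eq_C_of_natDegree_eq_zero h0
        rw [hq, this]; simp
      have hX : (X + 1 : Polynomial ℝ).natDegree = 1 := by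
        simpa using Polynomial.natDegree_X_add_C (1 : ℝ)
      have hlc : (p.comp (X + 1)).leadingCoeff = p.leadingCoeff := by
        rw [Polynomial.leadingCoeff_comp (by rw [hX]; omega)]
        have : (X + 1 : Polynomial ℝ).leadingCoeff = 1 := by
          simpa using Polynomial.leadingCoeff_X_add_C (1 : ℝ)
        rw [this, one_pow, mul_one]
      have hc0 : p.comp (X + 1) ≠ 0 := by
        intro h
        apply hp0
        rw [← Polynomial.leadingCoeff_eq_zero, ← hlc, h, Polynomial.leadingCoeff_zero]
      have hnd : (p.comp (X + 1)).natDegree = p.natDegree := by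
        rw [Polynomial.natDegree_comp, hX, mul_one]
      have hdeg : (p.comp (X + 1)).degree = p.degree := by
        rw [Polynomial.degree_eq_natDegree hc0, Polynomial.degree_eq_natDegree hp0, hnd]
      have hlt : q.degree < p.degree := by
        have := Polynomial.degree_sub_lt hdeg hc0 hlc
        rwa [hdeg] at this
      have : q.natDegree < p.natDegree := Polynomial.natDegree_lt_natDegree hq0 hlt
      omega

open Polynomial in
lemma degStirling_eq_zero (lam : ℝ) {l k : ℕ} (h : l < k) :
    degStirling lam l k = 0 := by
  set P : Polynomial ℝ := ∏ i ∈ Finset.range l, (X - C ((i : ℝ) * lam)) with hP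
  have heval : ∀ x : ℝ, P.eval x = degFall lam x l := by
    intro x; simp [hP, degFall, Polynomial.eval_prod]
  have hdeg : P.natDegree = l := by
    rw [hP, Polynomial.natDegree_prod]
    · simp only [Polynomial.natDegree_X_sub_C]
      simp
    · intro i _
      exact X_sub_C_ne_zero _
  have hsum := altsum_poly k P (by omega)
  unfold degStirling
  rw [show ∑ j ∈ Finset.range (k + 1),
      (-1 : ℝ) ^ (k - j) * (Nat.choose k j : ℝ) * degFall lam (j : ℝ) l
    = ∑ j ∈ Finset.range (k + 1),
      (-1 : ℝ) ^ (k - j) * (Nat.choose k j : ℝ) * P.eval (j : ℝ) from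
    Finset.sum_congr rfl fun j _ => by rw [heval]]
  rw [hsum, mul_zero]

/-- The degenerate `r`-Stirling numbers of the second kind in terms of the degenerate
Stirling numbers of the second kind. -/
theorem degrStirling_eq_sum (lam : ℝ) (r : ℕ) (hr : 0 < r) (n k : ℕ) (hkn : k ≤ n) :
    degrStirling lam r n k =
      ∑ l ∈ Finset.Icc k n,
        (Nat.choose n l : ℝ) * degStirling lam l k * degFall lam (r : ℝ) (n - l) := by
  have expand : degrStirling lam r n k = ∑ l ∈ Finset.range (n + 1),
      (Nat.choose n l : ℝ) * degStirling lam l k * degFall lam (r : ℝ) (n - l) := by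
    unfold degrStirling
    have : ∀ j ∈ Finset.range (k + 1),
        (-1 : ℝ) ^ (k - j) * (Nat.choose k j : ℝ) * degFall lam ((j : ℝ) + (r : ℝ)) n
        = ∑ l ∈ Finset.range (n + 1), (Nat.choose n l : ℝ) *
            ((-1 : ℝ) ^ (k - j) * (Nat.choose k j : ℝ) * degFall lam (j : ℝ) l) *
            degFall lam (r : ℝ) (n - l) := by
      intro j hj
      rw [degFall_add, Finset.mul_sum]
      refine Finset.sum_congr rfl fun l _ => by ring
    rw [Finset.sum_congr rfl this, Finset.sum_comm, Finset.mul_sum]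
    refine Finset.sum_congr rfl fun l _ => ?_
    unfold degStirling
    simp only [Finset.mul_sum, Finset.sum_mul]
    refine Finset.sum_congr rfl fun j _ => by ring
  rw [expand]
  refine (Finset.sum_subset ?_ ?_).symm
  · intro l hl
    rw [Finset.mem_Icc] at hl
    rw [Finset.mem_range]
    omega
  · intro l hl hl2
    rw [Finset.mem_range] at hl
    rw [Finset.mem_Icc] at hl2
    have : l < k := by omega
    rw [degStirling_eq_zero lam this, mul_zero, zero_mul]
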